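/- Let A be a normalized semi-module for coprime m, h, with type μ⁰, and let (A, φ) be an extended semi-module for a dominant μ ∈ ℕ^h. Then μ⁰_dom ⪯ μ, where μ⁰_dom is the dominant (weakly increasing) rearrangement of μ⁰. Moreover, if μ⁰_dom = μ, then (A, φ) is cyclic, i.e., φ(a) = max{n : a + m - nh ∈ A} for all a ∈ A. -/

import Mathlib

/-- A semi-module for `m`, `h`: a nonempty subset of `ℤ`, bounded below,
closed under addition of `m` and of `h`. -/
def IsSemiModule (m h : ℤ) (A : Set ℤ) : Prop :=
  A.Nonempty ∧ BddBelow A ∧ (∀ a ∈ A, a + m ∈ A) ∧ (∀ a ∈ A, a + h ∈ A)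

/-- `B = A \ (h + A)`. -/
def BSet (h : ℤ) (A : Set ℤ) : Set ℤ := {a ∈ A | a - h ∉ A}

/-- A semi-module is normalized if the elements of `B = A \ (h+A)` sum to `h(h-1)/2`. -/
def IsNormalized (h : ℤ) (A : Set ℤ) : Prop :=
  ∃ s : Finset ℤ, ↑s = BSet h A ∧ ∑ a ∈ s, a = h * (h - 1) / 2

/-- `max {n : ℕ | a + m - n h ∈ A}`. -/
noncomputable def maxShift (m h : ℤ) (A : Set ℤ) (a : ℤ) : ℕ :=
  sSup {n : ℕ | a + m - n * h ∈ A}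

/-- The type of a normalized semi-module `A`:
`b 0 = min B`, and `b (i+1) = b i + m - μ' i · h` with `μ' i` the maximal
nonnegative integer such that `b (i+1) ∈ A`. -/
def HasType (m h : ℕ) (A : Set ℤ) (μ' : Fin h → ℕ) : Prop :=
  ∃ b : ℕ → ℤ,
    b 0 ∈ BSet h A ∧ (∀ x ∈ BSet h A, b 0 ≤ x) ∧
    ∀ i : Fin h,
      b (i + 1) = b i + m - μ' i * h ∧ b (i + 1) ∈ A ∧
        b i + m - (μ' i + 1) * h ∉ A

/-- Partial sum of the first `i` entries of a vector in `ℕ^h`. -/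
def psum {h : ℕ} (μ : Fin h → ℕ) (i : ℕ) : ℕ :=
  ∑ j : Fin h, if (j : ℕ) < i then μ j else 0

/-- Dominance order `ψ ⪯ χ` (with the paper's conventions, dominant vectors
are weakly increasing): all partial sums of `χ` are at most those of `ψ`,
with equal total sum. -/
def Dominates {h : ℕ} (ψ χ : Fin h → ℕ) : Prop :=
  (∀ i : ℕ, psum χ i ≤ psum ψ i) ∧ psum ψ h = psum χ h

/-- An extended semi-module `(A, φ)` for `μ`. -/
def IsExtSemiModule (m h : ℕ) (A : Set ℤ) (φ : ℤ → WithBot ℕ) (μ : Fin h → ℕ) : Prop :=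
  IsSemiModule m h A ∧ IsNormalized h A ∧
  (∀ a : ℤ, φ a = ⊥ ↔ a ∉ A) ∧
  (∀ a : ℤ, φ a + 1 ≤ φ (a + h)) ∧
  (∀ a ∈ A, φ a ≤ (maxShift m h A a : WithBot ℕ)) ∧
  (∀ a ∈ A, (∀ b : ℤ, a ≤ b → b ∈ A) → φ a = (maxShift m h A a : WithBot ℕ)) ∧
  ∃ seq : Fin h → ℕ → ℤ,
    (∀ l j, seq l j ∈ A) ∧
    (∀ a ∈ A, ∃! p : Fin h × ℕ, seq p.1 p.2 = a) ∧
    (∀ l j, φ (seq l (j + 1)) = φ (seq l j) + 1) ∧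
    (∀ l j, (φ (seq l j + h) = φ (seq l j) + 1 → seq l (j + 1) = seq l j + h) ∧
            (φ (seq l j + h) ≠ φ (seq l j) + 1 → seq l j + h < seq l (j + 1))) ∧
    ∃ σ : Equiv.Perm (Fin h), ∀ l, φ (seq l 0) = (μ (σ l) : WithBot ℕ)

/-- `(A, φ)` is cyclic: `φ a = max {n : a + m - n h ∈ A}` for all `a ∈ A`. -/
def IsCyclicExt (m h : ℕ) (A : Set ℤ) (φ : ℤ → WithBot ℕ) : Prop :=
  ∀ a ∈ A, φ a = (maxShift m h A a : WithBot ℕ)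

/-- The set `𝒱(A,φ) = {(a,b) ∈ A × A | b > a, φ a > φ b > φ (a - h)}`. -/
def Vset (h : ℕ) (A : Set ℤ) (φ : ℤ → WithBot ℕ) : Set (ℤ × ℤ) :=
  {p | p.1 ∈ A ∧ p.2 ∈ A ∧ p.1 < p.2 ∧ φ p.2 < φ p.1 ∧ φ (p.1 - h) < φ p.2}

/-- `d(b,μ) = Σ_{i=0}^{h-1} Σ_{j=1}^{i} (m/h - μ_j) - (h-1)/2`. -/
def dval (m h : ℕ) (μ : Fin h → ℕ) : ℚ :=
  (∑ i ∈ Finset.range h, ((i * m : ℚ) / h - psum μ i)) - (h - 1) / 2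

/-!
Both `maxShift` and `φ` take each value on `A` a computable number of times. By the type, `A` is
the disjoint union of the progressions `b i + ℕ h` (by coprimality the `b i`, `i < h`, meet every
residue class mod `h`), along which `maxShift` runs through `μ⁰ i, μ⁰ i + 1, …`; moreover
`∑ μ⁰ i = m` because `b h = b 0`. By the extended structure, `A` is the disjoint union of sequences along which
`φ` runs through `μ (σ l), μ (σ l) + 1, …`. As `φ ≤ maxShift`, the set `{maxShift < t}` lies in
`{φ < t}`, whence `∑ (t - μ⁰ i)₊ ≤ ∑ (t - μ i)₊` for every `t`. For weakly increasing `μ`, the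
right side at `t = μ k` equals `(k + 1) μ k - (μ 0 + ⋯ + μ k)`, which yields the partial-sum
inequalities of `μ⁰_dom ⪯ μ`. If `μ⁰_dom = μ`, the two finite sets have the same size and so
coincide, which forces `φ = maxShift`.
-/

open Function Set

section ClosedUnderAdd

variable {A : Set ℤ} {d : ℤ}

theorem add_natCast_mul_mem (hA : ∀ a ∈ A, a + d ∈ A) {a : ℤ} (ha : a ∈ A) (k : ℕ) :
    a + k * d ∈ A := by
  induction k with
  | zero => simpa using ha
  | succ k ih => simpa [add_mul, ← add_assoc] using hA _ ih

theorem add_mul_mem_iff (hA : ∀ a ∈ A, a + d ∈ A) {r : ℤ} (hr : r ∈ A) (hr' : r - d ∉ A)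
    (j : ℤ) : r + j * d ∈ A ↔ 0 ≤ j := by
  refine ⟨fun hj => ?_, fun hj => ?_⟩
  · by_contra! hneg
    have := add_natCast_mul_mem hA hj (-j - 1).toNat
    rw [Int.toNat_of_nonneg (by omega), show r + j * d + (-j - 1) * d = r - d by ring] at this
    exact hr' this
  · simpa [Int.toNat_of_nonneg hj] using add_natCast_mul_mem hA hr j.toNat

theorem eq_of_sub_notMem_of_dvd_sub (hA : ∀ a ∈ A, a + d ∈ A) {r r' : ℤ} (hr : r ∈ A)
    (hr' : r - d ∉ A) (hs : r' ∈ A) (hs' : r' - d ∉ A) (hdvd : d ∣ r - r') : r = r' := by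
  obtain ⟨j, hj⟩ := hdvd
  have h₁ := (add_mul_mem_iff hA hs hs' j).mp
    (by rwa [show r' + j * d = r by linear_combination -hj])
  have h₂ := (add_mul_mem_iff hA hr hr' (-j)).mp
    (by rwa [show r + -j * d = r' by linear_combination hj])
  linear_combination hj + (le_antisymm (by omega) h₁ : j = 0) * d

end ClosedUnderAdd

theorem maxShift_eq {m h : ℤ} {A : Set ℤ} (hA : ∀ a ∈ A, a + h ∈ A) {a : ℤ} {c : ℕ}
    (hc : a + m - c * h ∈ A) (hc' : a + m - c * h - h ∉ A) : maxShift m h A a = c := by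
  have hIic : {n : ℕ | a + m - n * h ∈ A} = Iic c := by
    ext n
    have := add_mul_mem_iff hA hc hc' (c - n)
    rw [show a + m - c * h + (c - n : ℤ) * h = a + m - n * h by ring] at this
    simp only [mem_ofPred_eq, this, mem_Iic]
    omega
  rw [maxShift, hIic, csSup_Iic]

section PartialSums

variable {h : ℕ}

theorem psum_zero (f : Fin h → ℕ) : psum f 0 = 0 := by
  simp [psum]

theorem psum_succ (f : Fin h → ℕ) (i : Fin h) : psum f (i + 1) = psum f i + f i := by
  have hsplit : ∀ j : Fin h, (if (j : ℕ) < i + 1 then f j else 0) =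
      (if (j : ℕ) < i then f j else 0) + if j = i then f j else 0 := by
    intro j
    rcases lt_trichotomy (j : ℕ) i with hj | hj | hj
    · simp [hj, hj.trans (Nat.lt_succ_self _), Fin.ne_of_lt hj]
    · simp [Fin.ext hj]
    · simp [show ¬ (j : ℕ) < i + 1 by omega, hj.not_gt, (Fin.ne_of_lt hj).symm]
  rw [psum, psum, Finset.sum_congr rfl fun j _ => hsplit j, Finset.sum_add_distrib]
  simp

theorem psum_of_le (f : Fin h → ℕ) {k : ℕ} (hk : h ≤ k) : psum f k = ∑ j, f j :=
  Finset.sum_congr rfl fun j _ => if_pos (j.isLt.trans_le hk)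

theorem psum_const {k : ℕ} (hk : k ≤ h) (t : ℕ) : psum (fun _ : Fin h => t) k = k * t := by
  rw [psum, ← Finset.sum_filter, Finset.sum_const, Fin.card_filter_val_lt, min_eq_right hk,
    smul_eq_mul]

theorem mul_le_psum_add_sum_tsub (ψ : Fin h → ℕ) (t : ℕ) {k : ℕ} (hk : k ≤ h) :
    k * t ≤ psum ψ k + ∑ j, (t - ψ j) := by
  rw [← psum_const hk, psum, psum, ← Finset.sum_add_distrib]
  gcongr with j
  split_ifs <;> omega

theorem psum_add_sum_tsub_of_monotone {χ : Fin h → ℕ} (hχ : Monotone χ) (i : Fin h) :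
    psum χ (i + 1) + ∑ j, (χ i - χ j) = (i + 1) * χ i := by
  rw [← psum_const i.isLt, psum, psum, ← Finset.sum_add_distrib]
  refine Finset.sum_congr rfl fun j _ => ?_
  split_ifs with hj
  · have := hχ (show j ≤ i by rw [Fin.le_iff_val_le_val]; omega)
    omega
  · have := hχ (show i ≤ j by rw [Fin.le_iff_val_le_val]; omega)
    omega

theorem dominates_of_sum_tsub_le {ψ χ : Fin h → ℕ} (hχ : Monotone χ)
    (hsum : ∑ i, ψ i = ∑ i, χ i) (htsub : ∀ t, ∑ i, (t - ψ i) ≤ ∑ i, (t - χ i)) :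
    Dominates ψ χ := by
  refine ⟨fun k => ?_, by rw [psum_of_le ψ le_rfl, psum_of_le χ le_rfl, hsum]⟩
  rcases k with _ | k
  · simp [psum_zero]
  rcases lt_or_ge k h with hk | hk
  · have hχk := psum_add_sum_tsub_of_monotone hχ ⟨k, hk⟩
    have hψk := mul_le_psum_add_sum_tsub ψ (χ ⟨k, hk⟩) (show k + 1 ≤ h by omega)
    have := htsub (χ ⟨k, hk⟩)
    simp only at hχk
    omega
  · rw [psum_of_le ψ (by omega), psum_of_le χ (by omega), hsum]

end PartialSums

theorem encard_setOf_lt_of_injective {α β : Type*} [Fintype α] {e : α × ℕ → β}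
    (he : Injective e) {c : α → ℕ} {f : β → WithBot ℕ} (hf : ∀ i k, f (e (i, k)) = ↑(c i + k))
    (t : ℕ) : {x | x ∈ range e ∧ f x < t}.encard = ↑(∑ i, (t - c i)) := by
  have himage : {x | x ∈ range e ∧ f x < t} =
      e '' ((Finset.univ.sigma fun i => Finset.range (t - c i)).map
        (Equiv.sigmaEquivProd α ℕ).toEmbedding : Set (α × ℕ)) := by
    ext x
    simp only [mem_ofPred_eq, mem_range, mem_image, Finset.coe_map, Finset.coe_sigma,
      Finset.coe_univ, Finset.coe_range]
    constructor
    · rintro ⟨⟨⟨i, k⟩, rfl⟩, hlt⟩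
      rw [hf] at hlt
      norm_cast at hlt
      refine ⟨(i, k), ⟨⟨i, k⟩, ?_, rfl⟩, rfl⟩
      simp only [mem_sigma_iff, mem_univ, mem_Iio, true_and]
      omega
    · rintro ⟨_, ⟨⟨i, k⟩, hk, rfl⟩, rfl⟩
      simp only [mem_sigma_iff, mem_univ, mem_Iio, true_and] at hk
      refine ⟨⟨_, rfl⟩, ?_⟩
      rw [Equiv.toEmbedding_apply, Equiv.sigmaEquivProd_apply, hf]
      exact_mod_cast (by omega : c i + k < t)
  rw [himage, he.encard_image, Set.encard_coe_eq_coe_finsetCard, Finset.card_map,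
    Finset.card_sigma]
  simp

def IsTypeSequence (m h : ℕ) (A : Set ℤ) (μ' : Fin h → ℕ) (b : ℕ → ℤ) : Prop :=
  b 0 ∈ BSet h A ∧ (∀ x ∈ BSet h A, b 0 ≤ x) ∧
    ∀ i : Fin h,
      b (i + 1) = b i + m - μ' i * h ∧ b (i + 1) ∈ A ∧
        b i + m - (μ' i + 1) * h ∉ A

namespace IsTypeSequence

variable {m h : ℕ} {A : Set ℤ} {μ' : Fin h → ℕ} {b : ℕ → ℤ}

theorem pos (hb : IsTypeSequence m h A μ' b) : 0 < h := by
  by_contra! h0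
  obtain ⟨hmem, hsub⟩ := hb.1
  simp [Nat.le_zero.mp h0, hmem] at hsub

theorem mem_bSet (hb : IsTypeSequence m h A μ' b) {i : ℕ} (hi : i ≤ h) : b i ∈ BSet h A := by
  rcases i with _ | i
  · exact hb.1
  · obtain ⟨hsucc, hmem, hnot⟩ := hb.2.2 ⟨i, by omega⟩
    refine ⟨hmem, fun hsub => hnot ?_⟩
    convert hsub using 1
    rw [hsucc]
    ring

theorem eq_sub_psum (hb : IsTypeSequence m h A μ' b) {i : ℕ} (hi : i ≤ h) :
    b i = b 0 + i * m - psum μ' i * h := by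
  induction i with
  | zero => simp [psum_zero]
  | succ i ih =>
    rw [(hb.2.2 ⟨i, hi⟩).1, ih (by omega), show i + 1 = (⟨i, hi⟩ : Fin h) + 1 from rfl,
      psum_succ]
    push_cast
    ring

theorem maxShift_add (hb : IsTypeSequence m h A μ' b) (hA : ∀ a ∈ A, a + h ∈ A) (i : Fin h)
    (k : ℕ) : maxShift m h A (b i + k * h) = μ' i + k := by
  have hnext : b i + k * h + m - ((μ' i + k : ℕ) : ℤ) * h = b (i + 1) := by
    rw [(hb.2.2 i).1]; push_cast; ring
  obtain ⟨hmem, hnot⟩ := hb.mem_bSet (show (i : ℕ) + 1 ≤ h from i.isLt)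
  exact maxShift_eq hA (hnext ▸ hmem) (hnext ▸ hnot)

theorem psum_eq (hb : IsTypeSequence m h A μ' b) (hA : ∀ a ∈ A, a + h ∈ A) : psum μ' h = m := by
  obtain ⟨hmem, hnot⟩ := hb.mem_bSet le_rfl
  obtain ⟨hmem₀, hnot₀⟩ := hb.mem_bSet (Nat.zero_le h)
  have hdvd : (h : ℤ) ∣ b h - b 0 := ⟨m - psum μ' h, by rw [hb.eq_sub_psum le_rfl]; ring⟩
  have heq := eq_of_sub_notMem_of_dvd_sub hA hmem hnot hmem₀ hnot₀ hdvd
  rw [hb.eq_sub_psum le_rfl] at heq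
  have hzero : ((m : ℤ) - psum μ' h) * h = 0 := by linear_combination heq
  have := hb.pos
  rcases mul_eq_zero.mp hzero with h' | h' <;> omega

theorem intCast_zmod (hb : IsTypeSequence m h A μ' b) {i : ℕ} (hi : i ≤ h) :
    ((b i : ℤ) : ZMod h) = b 0 + i * m := by
  rw [hb.eq_sub_psum hi]
  push_cast
  rw [ZMod.natCast_self, mul_zero, sub_zero]

theorem bijective_intCast_zmod (hb : IsTypeSequence m h A μ' b) (hcop : Nat.Coprime m h) :
    Bijective fun i : Fin h => ((b i : ℤ) : ZMod h) := by
  have : NeZero h := ⟨hb.pos.ne'⟩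
  refine (Fintype.bijective_iff_injective_and_card _).mpr ⟨fun i i' he => ?_, by simp⟩
  simp only [hb.intCast_zmod i.isLt.le, hb.intCast_zmod i'.isLt.le, add_right_inj] at he
  rw [← ZMod.coe_unitOfCoprime m hcop, Units.mul_left_inj, ZMod.natCast_eq_natCast_iff',
    Nat.mod_eq_of_lt i.isLt, Nat.mod_eq_of_lt i'.isLt] at he
  exact Fin.ext he

theorem injective_add_mul (hb : IsTypeSequence m h A μ' b) (hcop : Nat.Coprime m h) :
    Injective fun p : Fin h × ℕ => b p.1 + p.2 * h := by
  rintro ⟨i, k⟩ ⟨i', k'⟩ he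
  have hi : i = i' := (hb.bijective_intCast_zmod hcop).1 <| by
    simpa using congrArg (fun x : ℤ => (x : ZMod h)) he
  subst hi
  have := hb.pos
  simp only [add_right_inj, mul_eq_mul_right_iff, Nat.cast_inj] at he
  simp only [Prod.mk.injEq, true_and]
  omega

theorem range_add_mul (hb : IsTypeSequence m h A μ' b) (hA : ∀ a ∈ A, a + h ∈ A)
    (hcop : Nat.Coprime m h) :
    range (fun p : Fin h × ℕ => b p.1 + p.2 * h) = A := by
  refine Subset.antisymm ?_ fun a ha => ?_
  · rintro _ ⟨⟨i, k⟩, rfl⟩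
    exact add_natCast_mul_mem hA (hb.mem_bSet i.isLt.le).1 k
  obtain ⟨i, hi⟩ := (hb.bijective_intCast_zmod hcop).2 (a : ZMod h)
  obtain ⟨j, hj⟩ := (ZMod.intCast_eq_intCast_iff_dvd_sub _ _ _).mp hi
  obtain ⟨hmem, hnot⟩ := hb.mem_bSet i.isLt.le
  have hj0 := (add_mul_mem_iff hA hmem hnot j).mp (by rwa [mul_comm, ← hj, add_sub_cancel])
  exact ⟨(i, j.toNat), by simp only [Int.toNat_of_nonneg hj0]; linear_combination -hj⟩

end IsTypeSequence

theorem IsExtSemiModule.exists_perm_parametrization {m h : ℕ} {A : Set ℤ}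
    {φ : ℤ → WithBot ℕ} {μ : Fin h → ℕ} (hext : IsExtSemiModule m h A φ μ) :
    ∃ (e : Fin h × ℕ → ℤ) (σ : Equiv.Perm (Fin h)),
      Injective e ∧ range e = A ∧ ∀ l j, φ (e (l, j)) = ↑(μ (σ l) + j) := by
  obtain ⟨-, -, -, -, -, -, seq, hseqA, huniq, hstep, -, σ, hstart⟩ := hext
  refine ⟨fun p => seq p.1 p.2, σ, fun p q he => ?_, ?_, fun l j => ?_⟩
  · exact (huniq _ (hseqA p.1 p.2)).unique rfl he.symm
  · exact Subset.antisymm (range_subset_iff.mpr fun p => hseqA p.1 p.2)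
      fun a ha => (huniq a ha).exists
  · induction j with
    | zero => simpa using hstart l
    | succ j ih =>
      rw [hstep, ih]
      rfl

theorem type_dominated_and_cyclic_general (m h : ℕ)
    (hcop : Nat.Coprime m h) (μ : Fin h → ℕ) (hμ : Monotone μ)
    (hsum : psum μ h = m) (A : Set ℤ) (φ : ℤ → WithBot ℕ)
    (hext : IsExtSemiModule m h A φ μ) (μ0 : Fin h → ℕ)
    (htype : HasType m h A μ0) :
    Dominates (μ0 ∘ Tuple.sort μ0) μ ∧
      (μ0 ∘ Tuple.sort μ0 = μ → IsCyclicExt m h A φ) := by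
  obtain ⟨b, hb⟩ := htype
  replace hb : IsTypeSequence m h A μ0 b := hb
  obtain ⟨e, σ, he, hrange, hφ⟩ := hext.exists_perm_parametrization
  obtain ⟨⟨-, -, -, hA⟩, -, hbot, -, hle, -⟩ := hext
  let T (t : ℕ) : Set ℤ := {a | a ∈ A ∧ (maxShift m h A a : WithBot ℕ) < t}
  let S (t : ℕ) : Set ℤ := {a | a ∈ A ∧ φ a < t}
  have hT (t : ℕ) : (T t).encard = ↑(∑ i, (t - μ0 i)) := by
    simpa only [T, hb.range_add_mul hA hcop] using encard_setOf_lt_of_injective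
      (hb.injective_add_mul hcop) (fun i k => congrArg _ (hb.maxShift_add hA i k)) t
  have hS (t : ℕ) : (S t).encard = ↑(∑ i, (t - μ i)) := by
    rw [← Equiv.sum_comp σ (fun i => t - μ i)]
    simpa only [S, hrange] using encard_setOf_lt_of_injective he hφ t
  have hTS (t : ℕ) : T t ⊆ S t := fun a ⟨ha, hlt⟩ => ⟨ha, (hle a ha).trans_lt hlt⟩
  have hsort (g : ℕ → ℕ) : ∑ i, g ((μ0 ∘ Tuple.sort μ0) i) = ∑ i, g (μ0 i) :=
    Equiv.sum_comp (Tuple.sort μ0) (g ∘ μ0)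
  refine ⟨dominates_of_sum_tsub_le hμ ?_ fun t => ?_, fun hμ0 a ha => ?_⟩
  · exact (Equiv.sum_comp (Tuple.sort μ0) μ0).trans <| by
      rw [← psum_of_le μ0 le_rfl, ← psum_of_le μ le_rfl, hb.psum_eq hA, hsum]
  · rw [hsort (t - ·)]
    exact_mod_cast (hT t).symm.trans_le ((encard_le_encard (hTS t)).trans (hS t).le)
  obtain ⟨p, hp⟩ := WithBot.ne_bot_iff_exists.mp fun hφa => (hbot a).mp hφa ha
  have hST : S (p + 1) = T (p + 1) := by
    refine ((finite_of_encard_eq_coe (hT _)).eq_of_subset_of_encard_le (hTS _) ?_).symm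
    rw [hT, hS, ← hμ0, hsort (p + 1 - ·)]
  have haS : a ∈ S (p + 1) := ⟨ha, by rw [← hp]; exact WithBot.coe_lt_coe.mpr p.lt_succ_self⟩
  have hmax : (maxShift m h A a : WithBot ℕ) < ↑(p + 1) := (hST ▸ haS).2
  refine le_antisymm (hle a ha) ?_
  rw [← hp]
  exact WithBot.coe_le_coe.mpr (Nat.lt_succ_iff.mp (WithBot.coe_lt_coe.mp hmax))

/-- if `(A,φ)` is an extended semi-module for dominant `μ` and
`μ⁰` is the type of `A`, then `μ⁰_dom ⪯ μ`; moreover if `μ⁰_dom = μ` then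
`(A,φ)` is cyclic. -/
theorem type_dominated_and_cyclic (m h : ℕ) (hm : 0 < m) (hh : 0 < h)
    (hcop : Nat.Coprime m h) (μ : Fin h → ℕ) (hμ : Monotone μ)
    (hsum : psum μ h = m) (A : Set ℤ) (φ : ℤ → WithBot ℕ)
    (hext : IsExtSemiModule m h A φ μ) (μ0 : Fin h → ℕ)
    (htype : HasType m h A μ0) :
    Dominates (μ0 ∘ Tuple.sort μ0) μ ∧
      (μ0 ∘ Tuple.sort μ0 = μ → IsCyclicExt m h A φ) :=
  type_dominated_and_cyclic_general m h hcop μ hμ hsum A φ hext μ0 htype
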